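/- Let ε > 0, f : ℝ → ℂ continuous, f ∈ L_p(ℝ) with 0 < p < ∞, and suppose there is a sequence x_n → ∞ with |f(x_n)| ≥ ε for all n. Then there exist sequences (u_k) and (y_k) with u_k → ∞, u_k < y_k, |f(u_k)| ≥ ε, |f(y_k)| = ε/2, |f(x)| ≥ ε/2 for all x ∈ [u_k, y_k], and the intervals [u_k, y_k] pairwise disjoint; consequently (ε/2)^p ∑_k (y_k − u_k) ≤ ‖f‖_{L_p(ℝ)}^p, so y_k − u_k → 0. -/

import Mathlib

open MeasureTheory Filter Function
open scoped ENNReal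

/-! Every `x n` with `ε ≤ ‖f (x n)‖` is followed by a first point `y` with `‖f y‖ = ε / 2`:
such a point exists because `‖f‖ ^ p` is integrable, so `‖f‖` cannot stay above `ε / 2` on a
half-line, and the first one is found by the intermediate value theorem. Restarting the search
beyond the previous `y` gives disjoint intervals on which `‖f‖ ≥ ε / 2`, so their total length is
controlled by `∫⁻ ‖f‖ ^ p`; the lengths are therefore summable and tend to `0`. -/

section LowerBound

variable {α E : Type*} [MeasurableSpace α] [NormedAddCommGroup E] {μ : Measure α} {f : α → E}
  {c p : ℝ}

theorem ofReal_rpow_mul_measure_le_setLIntegral {s : Set α} (hs : MeasurableSet s)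
    (hc : 0 ≤ c) (hp : 0 ≤ p) (hf : ∀ t ∈ s, c ≤ ‖f t‖) :
    ENNReal.ofReal (c ^ p) * μ s ≤ ∫⁻ t in s, (‖f t‖₊ : ℝ≥0∞) ^ p ∂μ := by
  rw [← setLIntegral_const]
  refine lintegral_mono_ae ((ae_restrict_mem hs).mono fun t ht => ?_)
  rw [← ENNReal.ofReal_rpow_of_nonneg hc hp, ← enorm_eq_nnnorm, ← ofReal_norm]
  exact ENNReal.rpow_le_rpow (ENNReal.ofReal_le_ofReal (hf t ht)) hp

theorem exists_norm_lt_of_lintegral_rpow_lt_top {s : Set α} (hs : MeasurableSet s)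
    (hμs : μ s = ∞) (hc : 0 < c) (hp : 0 ≤ p)
    (hLp : ∫⁻ t, (‖f t‖₊ : ℝ≥0∞) ^ p ∂μ < ∞) : ∃ t ∈ s, ‖f t‖ < c := by
  by_contra! hf
  have hc' : ENNReal.ofReal (c ^ p) ≠ 0 := by
    simpa using Real.rpow_pos_of_pos hc p
  have := (ofReal_rpow_mul_measure_le_setLIntegral (μ := μ) hs hc.le hp hf).trans
    (setLIntegral_le_lintegral s _)
  rw [hμs, ENNReal.mul_top hc'] at this
  exact (this.trans_lt hLp).false

theorem ofReal_rpow_mul_tsum_measure_le_lintegral {ι : Type*} [Countable ι] {s : ι → Set α}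
    (hs : ∀ k, MeasurableSet (s k)) (hdisj : Pairwise (Disjoint on s)) (hc : 0 ≤ c)
    (hp : 0 ≤ p) (hf : ∀ k, ∀ t ∈ s k, c ≤ ‖f t‖) :
    ENNReal.ofReal (c ^ p) * ∑' k, μ (s k) ≤ ∫⁻ t, (‖f t‖₊ : ℝ≥0∞) ^ p ∂μ :=
  calc ENNReal.ofReal (c ^ p) * ∑' k, μ (s k)
      ≤ ∑' k, ∫⁻ t in s k, (‖f t‖₊ : ℝ≥0∞) ^ p ∂μ := by
        rw [← ENNReal.tsum_mul_left]
        exact ENNReal.tsum_le_tsum fun k =>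
          ofReal_rpow_mul_measure_le_setLIntegral (hs k) hc hp (hf k)
    _ = ∫⁻ t in ⋃ k, s k, (‖f t‖₊ : ℝ≥0∞) ^ p ∂μ := (lintegral_iUnion hs hdisj _).symm
    _ ≤ ∫⁻ t, (‖f t‖₊ : ℝ≥0∞) ^ p ∂μ := setLIntegral_le_lintegral _ _

end LowerBound

theorem exists_first_eq_of_continuous {g : ℝ → ℝ} (hg : Continuous g) {a u : ℝ} (hu : a < g u)
    (hle : ∃ t, u ≤ t ∧ g t ≤ a) :
    ∃ y, u < y ∧ g y = a ∧ ∀ t ∈ Set.Icc u y, a ≤ g t := by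
  set S := {t | u ≤ t ∧ g t ≤ a}
  have hbdd : BddBelow S := ⟨u, fun t ht => ht.1⟩
  have hyS : sInf S ∈ S :=
    (isClosed_Ici.inter (isClosed_le hg continuous_const)).csInf_mem hle hbdd
  have huy : u < sInf S := hyS.1.lt_of_ne fun h => (h ▸ hyS.2).not_gt hu
  -- A point of `[u, sInf S]` where `g = a` lies in `S`, so it can only be `sInf S`.
  obtain ⟨z, hz, hgz⟩ := intermediate_value_Icc' huy.le hg.continuousOn ⟨hyS.2, hu.le⟩
  have hzy : z = sInf S := le_antisymm hz.2 (csInf_le hbdd ⟨hz.1, hgz.le⟩)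
  refine ⟨sInf S, huy, hzy ▸ hgz, fun t ht => ?_⟩
  rcases ht.2.lt_or_eq with hty | rfl
  · by_contra! hgt
    exact notMem_of_lt_csInf hty hbdd ⟨ht.1, hgt.le⟩
  · exact (hzy ▸ hgz).ge

theorem exists_seq_of_forall_exists_gt {P : ℝ → ℝ → Prop}
    (h : ∀ b, ∃ u y, b < u ∧ u < y ∧ P u y) :
    ∃ u y : ℕ → ℝ, Tendsto u atTop atTop ∧ (∀ k, u k < y k) ∧ (∀ k, y k < u (k + 1)) ∧
      ∀ k, P (u k) (y k) := by
  choose U Y hbU hUY hP using h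
  -- Searching beyond `k + 1` forces `u → ∞`; searching beyond `Y (b k)` separates the intervals.
  let b : ℕ → ℝ := fun k => Nat.rec 0 (fun k bk => max (Y bk) (k + 1)) k
  have hb : ∀ k, b (k + 1) = max (Y (b k)) (k + 1) := fun _ => rfl
  have hkb : ∀ k : ℕ, (k : ℝ) ≤ b k
    | 0 => by simp [b]
    | k + 1 => by rw [hb]; push_cast; exact le_max_right _ _
  refine ⟨fun k => U (b k), fun k => Y (b k), ?_, fun k => hUY _, fun k => ?_, fun k => hP _⟩
  · exact tendsto_atTop_mono (fun k => (hkb k).trans (hbU _).le) tendsto_natCast_atTop_atTop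
  · exact (le_max_left _ _).trans_lt ((hb k).symm ▸ hbU (b (k + 1)))

theorem pairwise_disjoint_Icc_of_lt_succ {α : Type*} [Preorder α] {u y : ℕ → α}
    (huy : ∀ k, u k ≤ y k) (hyu : ∀ k, y k < u (k + 1)) :
    Pairwise (Disjoint on fun k => Set.Icc (u k) (y k)) := by
  have hu : StrictMono u := strictMono_nat_of_lt_succ fun k => (huy k).trans_lt (hyu k)
  refine (pairwise_disjoint_on _).2 fun i j hij => Set.disjoint_left.2 fun t hti htj => ?_
  exact ((hti.2.trans_lt (hyu i)).trans_le (hu.monotone hij) |>.trans_le htj.1).false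

theorem tendsto_zero_of_tsum_ofReal_ne_top {l : ℕ → ℝ} (hl : ∀ k, 0 ≤ l k)
    (h : ∑' k, ENNReal.ofReal (l k) ≠ ∞) : Tendsto l atTop (nhds 0) := by
  have := (ENNReal.summable_toReal h).tendsto_atTop_zero
  simpa only [ENNReal.toReal_ofReal (hl _)] using this

/-- the covering/intermediate-value construction from the proof of
Lemma 2.1(b). -/
theorem covering_construction
    (ε : ℝ) (hε : 0 < ε)
    (f : ℝ → ℂ) (hf : Continuous f)
    (p : ℝ) (hp : 0 < p)
    (hLp : ∫⁻ x : ℝ, (‖f x‖₊ : ℝ≥0∞) ^ p < ∞)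
    (x : ℕ → ℝ) (hx : Tendsto x atTop atTop)
    (hfx : ∀ n, ε ≤ ‖f (x n)‖) :
    ∃ u y : ℕ → ℝ,
      Tendsto u atTop atTop ∧
      (∀ k, u k < y k) ∧
      (∀ k, ε ≤ ‖f (u k)‖) ∧
      (∀ k, ‖f (y k)‖ = ε / 2) ∧
      (∀ k, ∀ t ∈ Set.Icc (u k) (y k), ε / 2 ≤ ‖f t‖) ∧
      (Pairwise fun i j => Disjoint (Set.Icc (u i) (y i)) (Set.Icc (u j) (y j))) ∧
      (ENNReal.ofReal ((ε / 2) ^ p) * ∑' k, ENNReal.ofReal (y k - u k)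
        ≤ ∫⁻ t : ℝ, (‖f t‖₊ : ℝ≥0∞) ^ p) ∧
      Tendsto (fun k => y k - u k) atTop (nhds 0) := by
  have hε2 : 0 < ε / 2 := half_pos hε
  have hstep : ∀ b, ∃ u y, b < u ∧ u < y ∧ ε ≤ ‖f u‖ ∧ ‖f y‖ = ε / 2 ∧
      ∀ t ∈ Set.Icc u y, ε / 2 ≤ ‖f t‖ := by
    intro b
    obtain ⟨n, hn⟩ := (hx.eventually_gt_atTop b).exists
    obtain ⟨t, ht, hft⟩ := exists_norm_lt_of_lintegral_rpow_lt_top measurableSet_Ici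
      (Real.volume_Ici (a := x n)) hε2 hp.le hLp
    obtain ⟨y, hxy, hfy, hIcc⟩ := exists_first_eq_of_continuous hf.norm
      ((half_lt_self hε).trans_le (hfx n)) ⟨t, ht, hft.le⟩
    exact ⟨x n, y, hn, hxy, hfx n, hfy, hIcc⟩
  obtain ⟨u, y, hu, huy, hyu, hP⟩ := exists_seq_of_forall_exists_gt hstep
  have hIcc k := (hP k).2.2
  have hdisj := pairwise_disjoint_Icc_of_lt_succ (fun k => (huy k).le) hyu
  have hbound := ofReal_rpow_mul_tsum_measure_le_lintegral (μ := volume)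
    (fun k => measurableSet_Icc) hdisj hε2.le hp.le hIcc
  simp only [Real.volume_Icc] at hbound
  have hsum : ∑' k, ENNReal.ofReal (y k - u k) ≠ ∞ := fun htop => by
    rw [htop, ENNReal.mul_top (by simpa using Real.rpow_pos_of_pos hε2 p)] at hbound
    exact (hbound.trans_lt hLp).false
  exact ⟨u, y, hu, huy, fun k => (hP k).1, fun k => (hP k).2.1, hIcc, hdisj, hbound,
    tendsto_zero_of_tsum_ofReal_ne_top (fun k => sub_nonneg.2 (huy k).le) hsum⟩
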